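/- arXiv:2306.03819 — 4 statements merged into one kernel-verified Lean document; each statement's English description precedes it below -/
import Mathlib

section
/- Let X be an integrable random vector in ℝ^d and Z a random variable taking finitely many values j ∈ {1,...,k}, each with positive probability, such that the conditional mean E[X | Z = j] equals E[X] for every j. Then for any convex loss L : ℝ^k × {1,...,k} → [0,∞) and any affine predictor η(x) = b + W x, the expected loss E[L(η(X), Z)] is at least the infimum over constant vectors c ∈ ℝ^k of E[L(c, Z)]. -/
/-!
On each class `{Z = j}` the affine predictor averages to the constant `c = b + W E[X]`: the class
mean of `X` is `E[X]`, and set averages commute with affine maps. Jensen's inequality on that class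
gives `P(Z = j) L(c, j) ≤ ∫_{Z = j} L(b + W X, j)`, and summing over `j` turns the left side into
`E[L(c, Z)]`, which dominates the infimum.
-/

open Matrix MeasureTheory

namespace MeasureTheory

section

variable {Ω m n : Type*} [MeasurableSpace Ω] {μ : Measure Ω} [Fintype m] [Fintype n]

lemma Integrable.mulVec {X : Ω → n → ℝ} (W : Matrix m n ℝ) (hX : Integrable X μ) :
    Integrable (fun ω ↦ W *ᵥ X ω) μ :=
  (LinearMap.toContinuousLinearMap (mulVecLin W)).integrable_comp hX

lemma integral_mulVec {X : Ω → n → ℝ} (W : Matrix m n ℝ) (hX : Integrable X μ) :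
    ∫ ω, W *ᵥ X ω ∂μ = W *ᵥ ∫ ω, X ω ∂μ :=
  (LinearMap.toContinuousLinearMap (mulVecLin W)).integral_comp_comm hX

variable {s : Set Ω}

lemma setAverage_const_add_mulVec {X : Ω → n → ℝ} (b : m → ℝ) (W : Matrix m n ℝ)
    (hs : μ.real s ≠ 0) (hX : IntegrableOn X s μ) :
    ⨍ ω in s, b + W *ᵥ X ω ∂μ = b + W *ᵥ ⨍ ω in s, X ω ∂μ := by
  have hμs : μ s ≠ ⊤ := fun h ↦ hs (by simp [measureReal_def, h])
  rw [setAverage_eq, setAverage_eq,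
    integral_add (integrableOn_const hμs).integrable (hX.mulVec W), setIntegral_const,
    integral_mulVec W hX, smul_add, smul_smul, inv_mul_cancel₀ hs, one_smul, mulVec_smul]

lemma setAverage_eq_of_setIntegral_eq_measureReal_mul {X : Ω → n → ℝ}
    (hs : μ.real s ≠ 0) (hX : ∀ i, IntegrableOn (X · i) s μ) (c : n → ℝ)
    (h : ∀ i, ∫ ω in s, X ω i ∂μ = μ.real s * c i) :
    ⨍ ω in s, X ω ∂μ = c := by
  ext i
  rw [setAverage_eq, Pi.smul_apply, eval_integral hX, h, smul_eq_mul, inv_mul_cancel_left₀ hs]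

end

section

variable {Ω ι E : Type*} [MeasurableSpace Ω] {μ : Measure Ω}
  [Fintype ι] [MeasurableSpace ι] [MeasurableSingletonClass ι] {Z : Ω → ι}
  [NormedAddCommGroup E] [NormedSpace ℝ E]

lemma integral_eq_sum_setIntegral_fiber (hZ : Measurable Z) {h : Ω → E}
    (hh : Integrable h μ) : ∫ ω, h ω ∂μ = ∑ j, ∫ ω in Z ⁻¹' {j}, h ω ∂μ := by
  rw [← integral_iUnion_fintype (fun j ↦ hZ (measurableSet_singleton j))
    (pairwise_disjoint_fiber Z) fun _ ↦ hh.integrableOn, ← Set.preimage_iUnion,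
    Set.iUnion_of_singleton, Set.preimage_univ, Measure.restrict_univ]

lemma integral_comp_eq_sum_measureReal_fiber [CompleteSpace E] [IsFiniteMeasure μ]
    (hZ : Measurable Z) (g : ι → E) : ∫ ω, g (Z ω) ∂μ = ∑ j, μ.real (Z ⁻¹' {j}) • g j := by
  rw [← integral_map hZ.aemeasurable (Integrable.of_finite).aestronglyMeasurable,
    integral_fintype Integrable.of_finite]
  simp_rw [map_measureReal_apply hZ (measurableSet_singleton _)]

end

end MeasureTheory

lemma ConvexOn.measureReal_mul_map_setAverage_le {Ω E : Type*} [MeasurableSpace Ω]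
    {μ : Measure Ω} [NormedAddCommGroup E] [NormedSpace ℝ E] [FiniteDimensional ℝ E]
    {g : E → ℝ} {f : Ω → E} {s : Set Ω}
    (hg : ConvexOn ℝ Set.univ g) (hs0 : μ s ≠ 0) (hs : μ s ≠ ⊤)
    (hf : IntegrableOn f s μ) (hgf : IntegrableOn (g ∘ f) s μ) :
    μ.real s * g (⨍ ω in s, f ω ∂μ) ≤ ∫ ω in s, g (f ω) ∂μ := by
  have hpos : 0 < μ.real s := ENNReal.toReal_pos hs0 hs
  calc μ.real s * g (⨍ ω in s, f ω ∂μ) ≤ μ.real s * ⨍ ω in s, g (f ω) ∂μ :=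
        mul_le_mul_of_nonneg_left (hg.map_set_average_le (hg.continuousOn isOpen_univ)
          isClosed_univ hs0 hs (.of_forall fun _ ↦ Set.mem_univ _) hf hgf) hpos.le
    _ = ∫ ω in s, g (f ω) ∂μ := by
        rw [setAverage_eq, smul_eq_mul, mul_inv_cancel_left₀ hpos.ne']

/-- **Equal class centroids imply the trivially attainable loss is optimal.**
Let `X` be an integrable random vector in `ℝ^d` and `Z` a random variable with
values in `Fin k`, each class having positive probability, such that the
class-conditional mean of `X` on each event `{Z = j}` equals the unconditional
mean, i.e. `∫_{Z=j} X = P(Z=j) • E[X]`.  Then for any loss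
`L : ℝ^k × Fin k → [0,∞)` convex in its first argument and any affine predictor
`η(x) = b + W x` (with integrable loss), the expected loss
`E[L(b + W X, Z)]` is at least the infimum over constants `c ∈ ℝ^k` of
`E[L(c, Z)]` (the trivially attainable loss). -/
theorem equal_centroids_imply_trivial_loss_optimal {d k : ℕ}
    {Ω : Type*} [MeasurableSpace Ω] (μ : Measure Ω) [IsProbabilityMeasure μ]
    (X : Ω → Fin d → ℝ) (Z : Ω → Fin k)
    (hZmeas : Measurable Z)
    (hXint : ∀ i, Integrable (fun ω => X ω i) μ)
    (hZpos : ∀ j : Fin k, 0 < μ {ω | Z ω = j})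
    -- each class-conditional mean equals the unconditional mean
    (hmeans : ∀ j : Fin k, ∀ i : Fin d,
      ∫ ω in {ω | Z ω = j}, X ω i ∂μ = (μ {ω | Z ω = j}).toReal * ∫ ω, X ω i ∂μ)
    (L : (Fin k → ℝ) → Fin k → ℝ)
    (hLnonneg : ∀ η j, 0 ≤ L η j)
    (hLconvex : ∀ j : Fin k, ConvexOn ℝ Set.univ (fun η => L η j))
    (b : Fin k → ℝ) (W : Matrix (Fin k) (Fin d) ℝ)
    (hint : Integrable (fun ω => L (b + W *ᵥ X ω) (Z ω)) μ) :
    (⨅ c : Fin k → ℝ, ∫ ω, L c (Z ω) ∂μ) ≤ ∫ ω, L (b + W *ᵥ X ω) (Z ω) ∂μ := by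
  set S : Fin k → Set Ω := fun j ↦ Z ⁻¹' {j}
  have hS : ∀ j, MeasurableSet (S j) := fun j ↦ hZmeas (measurableSet_singleton j)
  have hS_pos : ∀ j, 0 < μ.real (S j) := fun j ↦
    ENNReal.toReal_pos (hZpos j).ne' (measure_ne_top μ _)
  have hX : Integrable X μ := Integrable.of_eval hXint
  set c := b + W *ᵥ fun i ↦ ∫ ω, X ω i ∂μ
  have hclass_mean : ∀ j, ⨍ ω in S j, b + W *ᵥ X ω ∂μ = c := fun j ↦ by
    rw [setAverage_const_add_mulVec b W (hS_pos j).ne' hX.integrableOn,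
      setAverage_eq_of_setIntegral_eq_measureReal_mul (hS_pos j).ne'
        (fun i ↦ (hXint i).integrableOn) _ (hmeans j)]
  have hclass_jensen : ∀ j, μ.real (S j) * L c j ≤ ∫ ω in S j, L (b + W *ᵥ X ω) (Z ω) ∂μ := by
    intro j
    have hfiber :
        Set.EqOn (fun ω ↦ L (b + W *ᵥ X ω) (Z ω)) (fun ω ↦ L (b + W *ᵥ X ω) j) (S j) :=
      fun ω (hω : Z ω = j) ↦ congrArg (L _) hω
    rw [← hclass_mean j, setIntegral_congr_fun (hS j) hfiber]
    exact (hLconvex j).measureReal_mul_map_setAverage_le (hZpos j).ne' (measure_ne_top μ _)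
      ((integrable_const b).add (hX.mulVec W)).integrableOn
      (hint.integrableOn.congr_fun hfiber (hS j))
  have hbdd : BddBelow (Set.range fun a ↦ ∫ ω, L a (Z ω) ∂μ) :=
    ⟨0, by rintro _ ⟨a, rfl⟩; exact integral_nonneg fun ω ↦ hLnonneg _ _⟩
  calc ⨅ c, ∫ ω, L c (Z ω) ∂μ ≤ ∫ ω, L c (Z ω) ∂μ := ciInf_le hbdd c
    _ = ∑ j, μ.real (S j) * L c j := integral_comp_eq_sum_measureReal_fiber hZmeas (L c)
    _ ≤ ∑ j, ∫ ω in S j, L (b + W *ᵥ X ω) (Z ω) ∂μ :=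
        Finset.sum_le_sum fun j _ ↦ hclass_jensen j
    _ = ∫ ω, L (b + W *ᵥ X ω) (Z ω) ∂μ := (integral_eq_sum_setIntegral_fiber hZmeas hint).symm
end

section
/- Let Σ be a positive semidefinite d×d real matrix with p.s.d. square root W' = Σ^{1/2} and W = (Σ^{1/2})^+ (Moore-Penrose pseudoinverse). Let S ∈ ℝ^{d×k} be any matrix with colsp(S) ⊆ colsp(Σ), and let Q = (WS)(WS)^+ be the orthogonal projection onto colsp(WS). Then the matrix P = I − W^+ Q W is idempotent: P² = P. -/
open Matrix

noncomputable def Matrix.PosSemidef.sqrt {n : Type*} [Fintype n] [DecidableEq n]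
    {A : Matrix n n ℝ} (hA : A.PosSemidef) : Matrix n n ℝ :=
  (hA.1.eigenvectorUnitary : Matrix n n ℝ) * diagonal ((↑) ∘ Real.sqrt ∘ hA.1.eigenvalues) *
    (star hA.1.eigenvectorUnitary : Matrix n n ℝ)

/-!
`P = 1 - Wp * Q * W` is idempotent as soon as `Wp * Q * W` is. Since `Q = (W * S) * T` has its
range inside that of `W`, and `W * Wp` is the identity there, `Q * W * Wp * Q = Q * Q = Q`,
which makes `Wp * Q * W` idempotent.
-/

theorem Matrix.isIdempotentElem_mul_of_mul_mul_eq {m n R : Type*} [Fintype m] [Fintype n]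
    [NonUnitalSemiring R] {A : Matrix m n R} {B : Matrix n m R} (h : A * B * A = A) :
    IsIdempotentElem (A * B) := by
  rw [IsIdempotentElem, ← Matrix.mul_assoc, h]

theorem IsIdempotentElem.mul_mul_of_mul_mul_eq {M : Type*} [Semigroup M] {q a b : M}
    (hq : IsIdempotentElem q) (h : a * b * q = q) : IsIdempotentElem (b * q * a) := by
  rw [IsIdempotentElem,
    show b * q * a * (b * q * a) = b * q * (a * b * q) * a by simp only [mul_assoc], h,
    hq.mul_mul_self]

theorem leace_idempotent_general {d k : ℕ}
    (W Wp : Matrix (Fin d) (Fin d) ℝ)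
    -- Wp is the Moore–Penrose pseudoinverse of W
    (hWp1 : W * Wp * W = W)
    (S : Matrix (Fin d) (Fin k) ℝ)
    (T : Matrix (Fin k) (Fin d) ℝ)
    -- T is the Moore–Penrose pseudoinverse of W * S
    (hT1 : (W * S) * T * (W * S) = W * S)
    (Q : Matrix (Fin d) (Fin d) ℝ) (hQ : Q = (W * S) * T)
    (P : Matrix (Fin d) (Fin d) ℝ) (hP : P = 1 - Wp * Q * W) :
    P * P = P := by
  have hQ_idem : IsIdempotentElem Q := hQ ▸ isIdempotentElem_mul_of_mul_mul_eq hT1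
  have hQ_range : W * Wp * Q = Q := by
    rw [hQ, Matrix.mul_assoc W S, ← Matrix.mul_assoc, hWp1]
  exact hP ▸ (hQ_idem.mul_mul_of_mul_mul_eq hQ_range).one_sub

/-- **Idempotence of the LEACE eraser.**
Let `Sig` be a positive semidefinite `d × d` real matrix with p.s.d. square root
`hSig.sqrt`, and let `W` be the Moore–Penrose pseudoinverse of `hSig.sqrt`
(characterized by the four Penrose conditions) and `Wp` the Moore–Penrose
pseudoinverse of `W`.  Let `S` be any `d × k` matrix whose column space is
contained in the column space of `Sig` (i.e. `S = Sig * C` for some `C`), and let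
`Q = (W * S) * T` where `T` is the Moore–Penrose pseudoinverse of `W * S`, so
that `Q` is the orthogonal projection onto `colsp (W * S)`.  Then the LEACE
matrix `P = I - Wp * Q * W` is idempotent: `P ^ 2 = P`. -/
theorem leace_idempotent {d k : ℕ}
    (Sig : Matrix (Fin d) (Fin d) ℝ) (hSig : Sig.PosSemidef)
    (W Wp : Matrix (Fin d) (Fin d) ℝ)
    -- W is the Moore–Penrose pseudoinverse of the p.s.d. square root of Sig
    (hW1 : hSig.sqrt * W * hSig.sqrt = hSig.sqrt)
    (hW2 : W * hSig.sqrt * W = W)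
    (hW3 : (hSig.sqrt * W)ᵀ = hSig.sqrt * W)
    (hW4 : (W * hSig.sqrt)ᵀ = W * hSig.sqrt)
    -- Wp is the Moore–Penrose pseudoinverse of W
    (hWp1 : W * Wp * W = W)
    (hWp2 : Wp * W * Wp = Wp)
    (hWp3 : (W * Wp)ᵀ = W * Wp)
    (hWp4 : (Wp * W)ᵀ = Wp * W)
    (S : Matrix (Fin d) (Fin k) ℝ)
    -- colsp(S) ⊆ colsp(Sig)
    (hS : ∃ C : Matrix (Fin d) (Fin k) ℝ, S = Sig * C)
    (T : Matrix (Fin k) (Fin d) ℝ)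
    -- T is the Moore–Penrose pseudoinverse of W * S
    (hT1 : (W * S) * T * (W * S) = W * S)
    (hT2 : T * (W * S) * T = T)
    (hT3 : ((W * S) * T)ᵀ = (W * S) * T)
    (hT4 : (T * (W * S))ᵀ = T * (W * S))
    (Q : Matrix (Fin d) (Fin d) ℝ) (hQ : Q = (W * S) * T)
    (P : Matrix (Fin d) (Fin d) ℝ) (hP : P = 1 - Wp * Q * W) :
    P * P = P :=
  leace_idempotent_general W Wp hWp1 S T hT1 Q hQ P hP
end

section
/- Let A ∈ ℝ^{d×d} be any matrix and I the identity. If V ⊆ ℝ^d is a subspace contained in ker(A), then ‖A − I‖_F² ≥ dim(V), with equality iff A = I − Π_V where Π_V is the orthogonal projection onto V. -/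
open Matrix Finset

private lemma frob_inner {d : ℕ} (X Y : Matrix (Fin d) (Fin d) ℝ) :
    ∑ i, ∑ j, X i j * Y i j = Matrix.trace (Xᵀ * Y) := by
  simp only [Matrix.trace, Matrix.diag, Matrix.mul_apply, Matrix.transpose_apply]
  exact Finset.sum_comm

/-- **Least-squares optimality of `I - Π_V` (whitened coordinates).**
Let `A` be a `d × d` real matrix and `V ⊆ ℝ^d` a subspace contained in the
kernel of `A` (i.e. `A v = 0` for all `v ∈ V`).  Let `Pi` be the orthogonal
projection matrix onto `V` (symmetric, fixing `V`, with range contained in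
`V`).  Then the squared Frobenius norm `‖A - I‖_F²` is at least `dim V`, with
equality if and only if `A = I - Pi`. -/
theorem frobenius_dist_ge_dim_of_ker {d : ℕ}
    (A : Matrix (Fin d) (Fin d) ℝ)
    (V : Submodule ℝ (Fin d → ℝ))
    (hAV : ∀ v ∈ V, A *ᵥ v = 0)
    (Pi : Matrix (Fin d) (Fin d) ℝ)
    (hPi_symm : Piᵀ = Pi)
    (hPi_fix : ∀ v ∈ V, Pi *ᵥ v = v)
    (hPi_range : ∀ x : Fin d → ℝ, Pi *ᵥ x ∈ V) :
    (Module.finrank ℝ V : ℝ) ≤ ∑ i, ∑ j, ((A - 1) i j) ^ 2 ∧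
      ((∑ i, ∑ j, ((A - 1) i j) ^ 2 = (Module.finrank ℝ V : ℝ)) ↔ A = 1 - Pi) := by
  classical
  set B : Matrix (Fin d) (Fin d) ℝ := A - 1 with hBdef
  set C : Matrix (Fin d) (Fin d) ℝ := B + Pi with hCdef
  -- Pi is idempotent
  have hPi2 : Pi * Pi = Pi := by
    ext i j
    have h := congrFun (hPi_fix _ (hPi_range (_root_.Pi.single j 1))) i
    simpa [Matrix.mul_apply, Matrix.mulVec, dotProduct, _root_.Pi.single_apply,
      mul_ite, Finset.sum_ite_eq'] using h
  -- A * Pi = 0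
  have hAPi : A * Pi = 0 := by
    ext i j
    have h := congrFun (hAV _ (hPi_range (_root_.Pi.single j 1))) i
    simpa [Matrix.mul_apply, Matrix.mulVec, dotProduct, _root_.Pi.single_apply,
      mul_ite, Finset.sum_ite_eq'] using h
  have hBPi : B * Pi = -Pi := by
    rw [hBdef, Matrix.sub_mul, hAPi, Matrix.one_mul, zero_sub]
  -- trace of Pi = finrank V
  have htr : Matrix.trace Pi = (Module.finrank ℝ V : ℝ) := by
    have hproj : LinearMap.IsProj V (Matrix.toLin' Pi) :=
      ⟨fun x => by simpa [Matrix.toLin'_apply] using hPi_range x,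
       fun x hx => by simpa [Matrix.toLin'_apply] using hPi_fix x hx⟩
    have h := hproj.trace
    rwa [LinearMap.trace_eq_matrix_trace ℝ (_root_.Pi.basisFun ℝ (Fin d)),
      LinearMap.toMatrix_eq_toMatrix', LinearMap.toMatrix'_toLin'] at h
  -- cross term vanishes
  have hcross : ∑ i, ∑ j, C i j * Pi i j = 0 := by
    rw [frob_inner, hCdef, Matrix.transpose_add, hPi_symm, Matrix.add_mul, hPi2,
      Matrix.trace_add]
    have : Matrix.trace (Bᵀ * Pi) = -Matrix.trace Pi := by
      rw [Matrix.trace_mul_comm, ← Matrix.trace_transpose (Pi * Bᵀ),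
        Matrix.transpose_mul, Matrix.transpose_transpose, hPi_symm, hBPi]
      simp
    rw [this]; ring
  have hPiPi : ∑ i, ∑ j, Pi i j * Pi i j = (Module.finrank ℝ V : ℝ) := by
    rw [frob_inner, hPi_symm, hPi2, htr]
  -- key decomposition
  have hkey : ∑ i, ∑ j, (B i j) ^ 2
      = (∑ i, ∑ j, (C i j) ^ 2) + (Module.finrank ℝ V : ℝ) := by
    have hB : ∀ i j, B i j = C i j - Pi i j := by
      intro i j; simp [hCdef]
    calc ∑ i, ∑ j, (B i j) ^ 2
        = ∑ i, ∑ j, ((C i j) ^ 2 - 2 * (C i j * Pi i j) + Pi i j * Pi i j) := by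
          refine Finset.sum_congr rfl fun i _ => Finset.sum_congr rfl fun j _ => ?_
          rw [hB]; ring
      _ = (∑ i, ∑ j, (C i j) ^ 2) - 2 * (∑ i, ∑ j, C i j * Pi i j)
            + ∑ i, ∑ j, Pi i j * Pi i j := by
          simp [Finset.sum_add_distrib, Finset.sum_sub_distrib, Finset.mul_sum]
      _ = (∑ i, ∑ j, (C i j) ^ 2) + (Module.finrank ℝ V : ℝ) := by
          rw [hcross, hPiPi]; ring
  have hCnonneg : 0 ≤ ∑ i, ∑ j, (C i j) ^ 2 :=
    Finset.sum_nonneg fun i _ => Finset.sum_nonneg fun j _ => sq_nonneg _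
  constructor
  · rw [hkey]; linarith
  · constructor
    · intro h
      have hC0 : ∑ i, ∑ j, (C i j) ^ 2 = 0 := by rw [hkey] at h; linarith
      have hC : C = 0 := by
        ext i j
        have h1 : ∀ i ∈ Finset.univ, (∑ j, (C i j) ^ 2) = 0 := by
          intro i _
          have := (Finset.sum_eq_zero_iff_of_nonneg
            (fun i _ => Finset.sum_nonneg fun j _ => sq_nonneg (C i j))).mp hC0
          exact this i (Finset.mem_univ i)
        have h2 := (Finset.sum_eq_zero_iff_of_nonneg
          (fun j _ => sq_nonneg (C i j))).mp (h1 i (Finset.mem_univ i)) j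
          (Finset.mem_univ j)
        have := pow_eq_zero_iff (n := 2) (by norm_num) |>.mp h2
        simpa using this
      have hBC : B = -Pi := by
        rw [hCdef] at hC
        exact eq_neg_of_add_eq_zero_left hC
      rw [hBdef] at hBC
      have := sub_eq_iff_eq_add.mp hBC
      rw [this, neg_add_eq_sub]
    · intro h
      have hC : C = 0 := by
        rw [hCdef, hBdef, h]; ext i j; simp
      rw [hkey, hC]; simp
end

section
/- Let H = L²(Ω, ℝ) with ⟨ξ, ζ⟩ = E[ξζ]. Let X ∈ H^d and Z ∈ H^k. Among all X' ∈ H^d with Cov(X', Z) = 0, the vector X'_LEACE = X − Σ_{XZ} Σ_{ZZ}^+ (Z − E[Z]) minimizes E‖X' − X‖²_M simultaneously for every p.s.d. matrix M (‖v‖²_M = vᵀ M v). -/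
open Matrix MeasureTheory ProbabilityTheory

/-!
Writing `M = Bᵀ B`, the quadratic risk splits into the second moments of the scalar projections
`b ⬝ᵥ (X' - X)`, so it suffices to treat one direction `b`. There `Y = b ⬝ᵥ K (Z - E Z)` with
`K = Σ_XZ Σ_ZZ⁺` is centred, and the Penrose identities make `W - Y` uncorrelated with `Y` for
`W = b ⬝ᵥ (X - X')`, because `X'` is uncorrelated with `Z`. Hence
`E[Y²] = Var Y ≤ Var W ≤ E[W²]`.
-/

namespace Matrix

variable {R n : Type*} [CommSemiring R] [Fintype n] {S T : Matrix n n R}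

theorem transpose_eq_self_of_penrose (hS : Sᵀ = S)
    (h1 : S * T * S = S) (h2 : T * S * T = T)
    (h3 : (S * T)ᵀ = S * T) (h4 : (T * S)ᵀ = T * S) : Tᵀ = T := by
  have hTtS : Tᵀ * S = S * T := by rw [← h3, transpose_mul, hS]
  have hSTt : S * Tᵀ = T * S := by rw [← h4, transpose_mul, hS]
  have hST : S * T = S * Tᵀ :=
    calc S * T = Tᵀ * (S * T * S) := by rw [h1, hTtS]
      _ = (Tᵀ * S) * (T * S) := by simp only [Matrix.mul_assoc]
      _ = (S * T * S) * Tᵀ := by rw [hTtS, ← hSTt]; simp only [Matrix.mul_assoc]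
      _ = S * Tᵀ := by rw [h1]
  have hTtSTt : Tᵀ * S * Tᵀ = Tᵀ := by
    simpa only [transpose_mul, hS, Matrix.mul_assoc] using congrArg transpose h2
  have hTS : T * S = Tᵀ * S := by
    simpa only [transpose_mul, hS, transpose_transpose] using (congrArg transpose hST).symm
  calc Tᵀ = Tᵀ * S * Tᵀ := hTtSTt.symm
    _ = Tᵀ * S * T := by rw [Matrix.mul_assoc, ← hST, ← Matrix.mul_assoc]
    _ = T * S * T := by rw [hTS]
    _ = T := h2

end Matrix

namespace ProbabilityTheory

variable {Ω m n : Type*} [MeasurableSpace Ω] {μ : Measure Ω}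

noncomputable def covMatrix (U : Ω → m → ℝ) (V : Ω → n → ℝ) (μ : Measure Ω) : Matrix m n ℝ :=
  Matrix.of fun i j => cov[fun ω => U ω i, fun ω => V ω j; μ]

variable {U : Ω → m → ℝ} {V : Ω → n → ℝ}

theorem transpose_covMatrix : (covMatrix U V μ)ᵀ = covMatrix V U μ := by
  ext i j
  exact covariance_comm _ _

theorem covMatrix_apply_eq_sub [IsProbabilityMeasure μ] (hU : ∀ i, MemLp (fun ω => U ω i) 2 μ)
    (hV : ∀ j, MemLp (fun ω => V ω j) 2 μ) (i : m) (j : n) :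
    covMatrix U V μ i j = (∫ ω, U ω i * V ω j ∂μ) - (∫ ω, U ω i ∂μ) * ∫ ω, V ω j ∂μ :=
  covariance_eq_sub (hU i) (hV j)

variable [Fintype m] [Fintype n]

theorem memLp_dotProduct {p : ENNReal} (hU : ∀ i, MemLp (fun ω => U ω i) p μ) (a : m → ℝ) :
    MemLp (fun ω => a ⬝ᵥ U ω) p μ :=
  memLp_finsetSum _ fun i _ => (hU i).const_mul (a i)

theorem integral_dotProduct (hU : ∀ i, Integrable (fun ω => U ω i) μ) (a : m → ℝ) :
    ∫ ω, a ⬝ᵥ U ω ∂μ = a ⬝ᵥ fun i => ∫ ω, U ω i ∂μ := by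
  simp only [dotProduct]
  rw [integral_finsetSum _ fun i _ => (hU i).const_mul (a i)]
  simp only [integral_const_mul]

theorem covariance_dotProduct [IsFiniteMeasure μ] (hU : ∀ i, MemLp (fun ω => U ω i) 2 μ)
    (hV : ∀ j, MemLp (fun ω => V ω j) 2 μ) (a : m → ℝ) (b : n → ℝ) :
    cov[fun ω => a ⬝ᵥ U ω, fun ω => b ⬝ᵥ V ω; μ] = a ⬝ᵥ covMatrix U V μ *ᵥ b := by
  simp only [dotProduct]
  rw [covariance_fun_sum_fun_sum (fun i => (hU i).const_mul (a i))
    (fun j => (hV j).const_mul (b j))]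
  simp only [covariance_const_mul_left, covariance_const_mul_right, mulVec, dotProduct,
    covMatrix, of_apply, Finset.mul_sum]
  refine Finset.sum_congr rfl fun i _ => Finset.sum_congr rfl fun j _ => by ring

theorem variance_le_of_covariance_eq [IsFiniteMeasure μ] {W Y : Ω → ℝ} (hW : MemLp W 2 μ)
    (hY : MemLp Y 2 μ) (h : cov[W, Y; μ] = Var[Y; μ]) : Var[Y; μ] ≤ Var[W; μ] := by
  have hWY : cov[W - Y, Y; μ] = 0 := by
    rw [covariance_sub_left hW hY hY, h, covariance_self hY.aemeasurable, sub_self]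
  have := variance_add (hW.sub hY) hY
  rw [sub_add_cancel, hWY] at this
  nlinarith [variance_nonneg (W - Y) μ]

theorem integral_quadForm_le_of_forall_integral_sq_le {U V : Ω → m → ℝ}
    (hU : ∀ i, MemLp (fun ω => U ω i) 2 μ) (hV : ∀ i, MemLp (fun ω => V ω i) 2 μ)
    {M : Matrix m m ℝ} (hM : M.PosSemidef)
    (h : ∀ b, ∫ ω, (b ⬝ᵥ U ω) ^ 2 ∂μ ≤ ∫ ω, (b ⬝ᵥ V ω) ^ 2 ∂μ) :
    ∫ ω, U ω ⬝ᵥ M *ᵥ U ω ∂μ ≤ ∫ ω, V ω ⬝ᵥ M *ᵥ V ω ∂μ := by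
  classical
  obtain ⟨B, rfl⟩ : ∃ B : Matrix m m ℝ, M = Bᴴ * B := by
    open scoped MatrixOrder in
    exact CStarAlgebra.nonneg_iff_eq_star_mul_self.mp hM.nonneg
  have hsq : ∀ v, v ⬝ᵥ (Bᴴ * B) *ᵥ v = ∑ i, (B i ⬝ᵥ v) ^ 2 := by
    intro v
    rw [conjTranspose_eq_transpose_of_trivial, ← mulVec_mulVec, dotProduct_mulVec,
      vecMul_transpose]
    simp [dotProduct, mulVec, sq]
  simp only [hsq]
  rw [integral_finsetSum _ fun i _ => (memLp_dotProduct hU (B i)).integrable_sq,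
    integral_finsetSum _ fun i _ => (memLp_dotProduct hV (B i)).integrable_sq]
  exact Finset.sum_le_sum fun i _ => h (B i)

theorem integral_sq_dotProduct_regression_le [IsProbabilityMeasure μ] {X X' : Ω → m → ℝ}
    {Z : Ω → n → ℝ} (hX : ∀ i, MemLp (fun ω => X ω i) 2 μ)
    (hX' : ∀ i, MemLp (fun ω => X' ω i) 2 μ) (hZ : ∀ j, MemLp (fun ω => Z ω j) 2 μ)
    {K : Matrix m n ℝ} (hK : K * covMatrix Z Z μ * Kᵀ = covMatrix X Z μ * Kᵀ)
    (hX'Z : covMatrix X' Z μ = 0) (b : m → ℝ) :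
    ∫ ω, (b ⬝ᵥ K *ᵥ (Z ω - fun j => ∫ ω', Z ω' j ∂μ)) ^ 2 ∂μ
      ≤ ∫ ω, (b ⬝ᵥ (X ω - X' ω)) ^ 2 ∂μ := by
  set u := Kᵀ *ᵥ b
  set c := u ⬝ᵥ fun j => ∫ ω, Z ω j ∂μ
  let Y : Ω → ℝ := fun ω => u ⬝ᵥ Z ω - c
  let W : Ω → ℝ := fun ω => b ⬝ᵥ X ω - b ⬝ᵥ X' ω
  have hY : MemLp Y 2 μ := (memLp_dotProduct hZ u).sub (memLp_const c)
  have hW : MemLp W 2 μ := (memLp_dotProduct hX b).sub (memLp_dotProduct hX' b)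
  have huZ : Integrable (fun ω => u ⬝ᵥ Z ω) μ := (memLp_dotProduct hZ u).integrable one_le_two
  have hY0 : μ[Y] = 0 := by
    rw [integral_sub huZ (integrable_const c),
      integral_dotProduct (fun j => (hZ j).integrable one_le_two), integral_const, sub_eq_zero]
    simp [c]
  have hquad : u ⬝ᵥ covMatrix Z Z μ *ᵥ u = b ⬝ᵥ covMatrix X Z μ *ᵥ u := by
    simp only [u]
    rw [mulVec_transpose, ← dotProduct_mulVec, ← mulVec_transpose, mulVec_mulVec,
      mulVec_mulVec, mulVec_mulVec, hK]
  have hcov : cov[W, Y; μ] = Var[Y; μ] :=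
    calc cov[W, Y; μ] = cov[W, fun ω => u ⬝ᵥ Z ω; μ] := covariance_sub_const_right huZ c
      _ = b ⬝ᵥ covMatrix X Z μ *ᵥ u - b ⬝ᵥ covMatrix X' Z μ *ᵥ u := by
        rw [covariance_fun_sub_left (memLp_dotProduct hX b) (memLp_dotProduct hX' b)
          (memLp_dotProduct hZ u), covariance_dotProduct hX hZ, covariance_dotProduct hX' hZ]
      _ = cov[fun ω => u ⬝ᵥ Z ω, fun ω => u ⬝ᵥ Z ω; μ] := by
        rw [hX'Z, zero_mulVec, dotProduct_zero, sub_zero, ← hquad, covariance_dotProduct hZ hZ]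
      _ = Var[Y; μ] := by
        rw [← covariance_self hY.aemeasurable, covariance_sub_const_left huZ,
          covariance_sub_const_right huZ]
  calc ∫ ω, (b ⬝ᵥ K *ᵥ (Z ω - fun j => ∫ ω', Z ω' j ∂μ)) ^ 2 ∂μ = ∫ ω, Y ω ^ 2 ∂μ := by
        simp only [Y, dotProduct_mulVec, ← mulVec_transpose, dotProduct_sub, u, c]
    _ = Var[Y; μ] := (variance_of_integral_eq_zero hY.aemeasurable hY0).symm
    _ ≤ Var[W; μ] := variance_le_of_covariance_eq hW hY hcov
    _ ≤ μ[W ^ 2] := variance_le_expectation_sq hW.aestronglyMeasurable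
    _ = ∫ ω, (b ⬝ᵥ (X ω - X' ω)) ^ 2 ∂μ := by simp only [W, dotProduct_sub, Pi.pow_apply]

end ProbabilityTheory

/-- **Oracle LEACE optimality (Theorem I.1).**
Let `X ∈ (L²)^d` and `Z ∈ (L²)^k` be random vectors.  Among all `X' ∈ (L²)^d`
with `Cov(X', Z) = 0`, the vector
`X'_LEACE = X - Σ_{XZ} Σ_{ZZ}⁺ (Z - E[Z])` minimizes `E‖X' - X‖²_M`
simultaneously for every p.s.d. matrix `M` (where `‖v‖²_M = vᵀ M v` and
`Σ_{ZZ}⁺` is the Moore–Penrose pseudoinverse of `Σ_{ZZ}`). -/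
theorem oracle_leace_optimal {d k : ℕ}
    {Ω : Type*} [MeasurableSpace Ω] (μ : Measure Ω) [IsProbabilityMeasure μ]
    (X : Ω → Fin d → ℝ) (Z : Ω → Fin k → ℝ)
    (hX : ∀ i, MemLp (fun ω => X ω i) 2 μ)
    (hZ : ∀ j, MemLp (fun ω => Z ω j) 2 μ)
    (mZ : Fin k → ℝ) (hmZ : ∀ j, mZ j = ∫ ω, Z ω j ∂μ)
    (Sxz : Matrix (Fin d) (Fin k) ℝ)
    (hSxz : ∀ i j, Sxz i j =
      (∫ ω, X ω i * Z ω j ∂μ) - (∫ ω, X ω i ∂μ) * (∫ ω, Z ω j ∂μ))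
    (Szz : Matrix (Fin k) (Fin k) ℝ)
    (hSzz : ∀ j l, Szz j l =
      (∫ ω, Z ω j * Z ω l ∂μ) - (∫ ω, Z ω j ∂μ) * (∫ ω, Z ω l ∂μ))
    (T : Matrix (Fin k) (Fin k) ℝ)
    (hT1 : Szz * T * Szz = Szz) (hT2 : T * Szz * T = T)
    (hT3 : (Szz * T)ᵀ = Szz * T) (hT4 : (T * Szz)ᵀ = T * Szz)
    (XL : Ω → Fin d → ℝ)
    (hXL : ∀ ω, XL ω = X ω - (Sxz * T) *ᵥ (Z ω - mZ))
    (M : Matrix (Fin d) (Fin d) ℝ) (hM : M.PosSemidef) :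
    ∀ X' : Ω → Fin d → ℝ,
      (∀ i, MemLp (fun ω => X' ω i) 2 μ) →
      (∀ i j, (∫ ω, X' ω i * Z ω j ∂μ) - (∫ ω, X' ω i ∂μ) * (∫ ω, Z ω j ∂μ) = 0) →
      ∫ ω, (XL ω - X ω) ⬝ᵥ M *ᵥ (XL ω - X ω) ∂μ
        ≤ ∫ ω, (X' ω - X ω) ⬝ᵥ M *ᵥ (X' ω - X ω) ∂μ := by
  intro X' hX' hCov
  obtain rfl : mZ = fun j => ∫ ω, Z ω j ∂μ := funext hmZ
  have hCzz : covMatrix Z Z μ = Szz := by ext j l; rw [covMatrix_apply_eq_sub hZ hZ, hSzz]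
  have hCxz : covMatrix X Z μ = Sxz := by ext i j; rw [covMatrix_apply_eq_sub hX hZ, hSxz]
  have hX'Z : covMatrix X' Z μ = 0 := by ext i j; rw [covMatrix_apply_eq_sub hX' hZ, hCov]; rfl
  have hTsymm : Tᵀ = T :=
    transpose_eq_self_of_penrose (hCzz ▸ transpose_covMatrix) hT1 hT2 hT3 hT4
  have hK : Sxz * T * covMatrix Z Z μ * (Sxz * T)ᵀ = covMatrix X Z μ * (Sxz * T)ᵀ := by
    rw [hCzz, hCxz, transpose_mul, hTsymm, Matrix.mul_assoc Sxz T, Matrix.mul_assoc,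
      ← Matrix.mul_assoc (T * Szz), hT2]
  have hResidual : ∀ ω, XL ω - X ω = -((Sxz * T) *ᵥ (Z ω - fun j => ∫ ω', Z ω' j ∂μ)) :=
    fun ω => by rw [hXL, sub_sub_cancel_left]
  have hX'X : ∀ ω, X' ω - X ω = -(X ω - X' ω) := fun ω => (neg_sub _ _).symm
  simp only [hResidual, hX'X, neg_dotProduct, mulVec_neg, dotProduct_neg, neg_neg]
  exact integral_quadForm_le_of_forall_integral_sq_le
    (fun i => memLp_dotProduct (fun j => (hZ j).sub (memLp_const _)) _)
    (fun i => (hX i).sub (hX' i)) hM (integral_sq_dotProduct_regression_le hX hX' hZ hK hX'Z)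
end
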